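/- Let λ > 0 be a real number and let u : ℝ³ → ℝ³ be a smooth vector field with compact support. Then div u (x) = 0 for all x ∈ ℝ³ if and only if div (λ•u − Δu) (x) = 0 for all x ∈ ℝ³, where Δu is the componentwise Laplacian of u. (The paper's Lemma 2 in the case of positive real λ, which is the only case used in the proof of Lemma 5: u is divergence free if and only if (λI − Δ)u is divergence free.) -/

import Mathlib

open MeasureTheory Filter Topology

noncomputable section

/-- ℝ³ as a Euclidean space. -/
abbrev E3 := EuclideanSpace ℝ (Fin 3)

/-- Divergence of a vector field `u : ℝ³ → ℝ³`:
`div u (x) = ∑ i ∂uᵢ/∂xᵢ (x)`. -/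
def vdiv (u : E3 → E3) (x : E3) : ℝ :=
  ∑ i : Fin 3, fderiv ℝ u x (EuclideanSpace.single i 1) i

/-- Componentwise Laplacian: `(Δu)ᵢ(x) = ∑ j ∂²uᵢ/∂xⱼ²(x)`. -/
def vlap (u : E3 → E3) (x : E3) : E3 :=
  (WithLp.equiv 2 (Fin 3 → ℝ)).symm fun i =>
    ∑ j : Fin 3,
      fderiv ℝ (fun y => fderiv ℝ u y (EuclideanSpace.single j 1) i) x
        (EuclideanSpace.single j 1)

/-- partial derivative -/
def pd (j : Fin 3) (g : E3 → ℝ) : E3 → ℝ :=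
  fun x => fderiv ℝ g x (EuclideanSpace.single j 1)

lemma contdiff_pd {g : E3 → ℝ} (hg : ContDiff ℝ (⊤ : ℕ∞) g) (j : Fin 3) :
    ContDiff ℝ (⊤ : ℕ∞) (pd j g) :=
  (hg.fderiv_right (by simp)).clm_apply contDiff_const

lemma pd_comm {g : E3 → ℝ} (hg : ContDiff ℝ (⊤ : ℕ∞) g) (i j : Fin 3) :
    pd i (pd j g) = pd j (pd i g) := by
  funext x
  have hd : ∀ y, HasFDerivAt g (fderiv ℝ g y) y := fun y =>
    (hg.differentiable (by simp) y).hasFDerivAt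
  have h2 : DifferentiableAt ℝ (fderiv ℝ g) x :=
    ((hg.fderiv_right (m := (⊤ : ℕ∞)) (by simp)).differentiable (by simp)) x
  have hsymm := second_derivative_symmetric hd h2.hasFDerivAt
    (EuclideanSpace.single j 1) (EuclideanSpace.single i 1)
  have key : ∀ v w : E3,
      fderiv ℝ (fun y => fderiv ℝ g y v) x w = fderiv ℝ (fderiv ℝ g) x w v := by
    intro v w
    have h : fderiv ℝ (fun y => fderiv ℝ g y v) x
        = (ContinuousLinearMap.apply ℝ ℝ v).comp (fderiv ℝ (fderiv ℝ g) x) :=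
      ((ContinuousLinearMap.apply ℝ ℝ v).hasFDerivAt.comp x h2.hasFDerivAt).fderiv
    rw [h]
    rfl
  show fderiv ℝ (fun y => fderiv ℝ g y (EuclideanSpace.single j 1)) x (EuclideanSpace.single i 1)
      = fderiv ℝ (fun y => fderiv ℝ g y (EuclideanSpace.single i 1)) x (EuclideanSpace.single j 1)
  rw [key, key]
  exact hsymm.symm

lemma pd_pd_nonpos_at_max {g : E3 → ℝ} (hg : ContDiff ℝ (⊤ : ℕ∞) g) {x₀ : E3}
    (hmax : ∀ x, g x ≤ g x₀) (j : Fin 3) : pd j (pd j g) x₀ ≤ 0 := by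
  set v : E3 := EuclideanSpace.single j 1 with hv
  set L : ℝ → E3 := fun t => x₀ + t • v with hL
  have hLd : ∀ t : ℝ, HasDerivAt L v t := by
    intro t
    simpa [hL] using ((hasDerivAt_id t).smul_const v).const_add x₀
  have hL0 : L 0 = x₀ := by simp [hL]
  have hh : ∀ t : ℝ, HasDerivAt (fun s => g (L s)) (pd j g (L t)) t := fun t =>
    ((hg.differentiable (by simp) (L t)).hasFDerivAt).comp_hasDerivAt t (hLd t)
  have hφ : ∀ t : ℝ, HasDerivAt (fun s => pd j g (L s)) (pd j (pd j g) (L t)) t := fun t =>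
    (((contdiff_pd hg j).differentiable (by simp) (L t)).hasFDerivAt).comp_hasDerivAt t (hLd t)
  by_contra hpos
  push_neg at hpos
  set c : ℝ := pd j (pd j g) x₀ with hc
  -- φ 0 = 0 since 0 is a max of h
  have hmax' : IsLocalMax (fun s => g (L s)) 0 :=
    Filter.Eventually.of_forall (fun t => by simpa [hL0] using hmax (L t))
  have hφ0 : pd j g (L 0) = 0 := hmax'.hasDerivAt_eq_zero (by simpa [hL0] using hh 0)
  have hslope : Tendsto (slope (fun s => pd j g (L s)) 0) (𝓝[≠] 0) (𝓝 c) := by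
    have := hφ 0
    rw [hL0, ← hc] at this
    exact hasDerivAt_iff_tendsto_slope.1 this
  have hev : ∀ᶠ t in 𝓝[>] (0:ℝ), 0 < pd j g (L t) := by
    have h1 : ∀ᶠ t in 𝓝[≠] (0:ℝ), 0 < slope (fun s => pd j g (L s)) 0 t :=
      hslope.eventually (eventually_gt_nhds hpos)
    have h2 : ∀ᶠ t in 𝓝[>] (0:ℝ), 0 < slope (fun s => pd j g (L s)) 0 t :=
      h1.filter_mono (nhdsWithin_mono 0 (fun t ht => ne_of_gt ht))
    filter_upwards [h2, self_mem_nhdsWithin] with t ht ht0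
    have ht0' : (0:ℝ) < t := ht0
    have : slope (fun s => pd j g (L s)) 0 t = pd j g (L t) / t := by
      simp [slope_def_field, hφ0]
    rw [this] at ht
    have := mul_pos ht ht0'
    rwa [div_mul_cancel₀ _ (ne_of_gt ht0')] at this
  obtain ⟨δ, hδ, hIoo⟩ := mem_nhdsGT_iff_exists_Ioo_subset.1 hev
  have hδ0 : (0:ℝ) < δ := hδ
  have hmono : StrictMonoOn (fun s => g (L s)) (Set.Icc 0 δ) := by
    apply strictMonoOn_of_deriv_pos (convex_Icc 0 δ)
    · exact (hg.continuous.comp (by continuity)).continuousOn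
    · intro t ht
      rw [interior_Icc] at ht
      rw [(hh t).deriv]
      exact hIoo ht
  have h01 : g (L 0) < g (L δ) :=
    hmono (Set.left_mem_Icc.2 hδ0.le) (Set.right_mem_Icc.2 hδ0.le) hδ0
  rw [hL0] at h01
  exact absurd (hmax (L δ)) (not_le.2 h01)


lemma pd_neg {h : E3 → ℝ} (j : Fin 3) :
    pd j (fun x => -h x) = fun x => -(pd j h x) := by
  funext x; simp [pd, fderiv_neg]

lemma pd_pd_nonneg_at_min {g : E3 → ℝ} (hg : ContDiff ℝ (⊤ : ℕ∞) g) {x₀ : E3}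
    (hmin : ∀ x, g x₀ ≤ g x) (j : Fin 3) : 0 ≤ pd j (pd j g) x₀ := by
  have hneg : pd j (pd j (fun x => -g x)) x₀ = -(pd j (pd j g) x₀) := by
    rw [pd_neg j]
    have := congrFun (pd_neg (h := pd j g) j) x₀
    simpa using this
  have := pd_pd_nonpos_at_max hg.neg (fun x => neg_le_neg (hmin x)) j
  rw [hneg] at this
  linarith

/-- i-th component of a vector field -/
def vcmp (i : Fin 3) (w : E3 → E3) : E3 → ℝ := fun x => w x i

lemma contdiff_vcmp {w : E3 → E3} (hw : ContDiff ℝ (⊤ : ℕ∞) w) (i : Fin 3) :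
    ContDiff ℝ (⊤ : ℕ∞) (vcmp i w) := contDiff_euclidean.1 hw i

lemma fderiv_apply_vcmp {w : E3 → E3} {x : E3} (hw : DifferentiableAt ℝ w x)
    (i : Fin 3) (z : E3) : fderiv ℝ w x z i = fderiv ℝ (vcmp i w) x z := by
  have h : fderiv ℝ (vcmp i w) x
      = (EuclideanSpace.proj (𝕜 := ℝ) i).comp (fderiv ℝ w x) :=
    ((EuclideanSpace.proj (𝕜 := ℝ) i).hasFDerivAt.comp x hw.hasFDerivAt).fderiv
  rw [h]
  rfl

lemma vdiv_eq {w : E3 → E3} (hw : Differentiable ℝ w) (x : E3) :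
    vdiv w x = ∑ i : Fin 3, pd i (vcmp i w) x := by
  unfold vdiv pd
  exact Finset.sum_congr rfl fun i _ => by rw [fderiv_apply_vcmp (hw x)]

lemma vcmp_vlap {u : E3 → E3} (hu : ContDiff ℝ (⊤ : ℕ∞) u) (i : Fin 3) :
    vcmp i (vlap u) = fun x => ∑ j : Fin 3, pd j (pd j (vcmp i u)) x := by
  funext x
  show vlap u x i = _
  unfold vlap
  rw [WithLp.equiv_symm_apply, WithLp.ofLp_toLp]
  refine Finset.sum_congr rfl fun j _ => ?_
  have h : (fun y => fderiv ℝ u y (EuclideanSpace.single j 1) i)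
      = pd j (vcmp i u) := by
    funext y
    exact fderiv_apply_vcmp (hu.differentiable (by simp) y) i _
  rw [h]
  rfl

lemma contdiff_vlap {u : E3 → E3} (hu : ContDiff ℝ (⊤ : ℕ∞) u) : ContDiff ℝ (⊤ : ℕ∞) (vlap u) := by
  rw [contDiff_euclidean]
  intro i
  have h : (fun x => vlap u x i) = fun x => ∑ j : Fin 3, pd j (pd j (vcmp i u)) x :=
    vcmp_vlap hu i
  rw [h]
  exact ContDiff.sum fun j _ => contdiff_pd (contdiff_pd (contdiff_vcmp hu i) j) j

lemma pd_finsum {F : Fin 3 → E3 → ℝ} (hF : ∀ i, ContDiff ℝ (⊤ : ℕ∞) (F i)) (j : Fin 3) :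
    pd j (fun x => ∑ i : Fin 3, F i x) = fun x => ∑ i : Fin 3, pd j (F i) x := by
  funext x
  unfold pd
  rw [fderiv_fun_sum fun i _ => ((hF i).differentiable (by simp)) x]
  simp

lemma vdiv_vlap_eq {u : E3 → E3} (hu : ContDiff ℝ (⊤ : ℕ∞) u) (x : E3) :
    vdiv (vlap u) x = ∑ j : Fin 3, pd j (pd j (vdiv u)) x := by
  have hc : ∀ i : Fin 3, ContDiff ℝ (⊤ : ℕ∞) (vcmp i u) := fun i => contdiff_vcmp hu i
  have hlhs : vdiv (vlap u) x
      = ∑ i : Fin 3, ∑ j : Fin 3, pd i (pd j (pd j (vcmp i u))) x := by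
    rw [vdiv_eq ((contdiff_vlap hu).differentiable (by simp))]
    refine Finset.sum_congr rfl fun i _ => ?_
    rw [vcmp_vlap hu i, pd_finsum (fun j => contdiff_pd (contdiff_pd (hc i) j) j) i]
  have hrhs : ∀ j : Fin 3, pd j (pd j (vdiv u)) x
      = ∑ i : Fin 3, pd j (pd j (pd i (vcmp i u))) x := by
    intro j
    have h1 : vdiv u = fun x => ∑ i : Fin 3, pd i (vcmp i u) x :=
      funext fun x => vdiv_eq (hu.differentiable (by simp)) x
    rw [h1, pd_finsum (fun i => contdiff_pd (hc i) i) j,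
      pd_finsum (fun i => contdiff_pd (contdiff_pd (hc i) i) j) j]
  rw [hlhs]
  rw [Finset.sum_comm]
  refine Finset.sum_congr rfl fun j _ => ?_
  rw [hrhs j]
  refine Finset.sum_congr rfl fun i _ => ?_
  have e1 : pd i (pd j (pd j (vcmp i u))) = pd j (pd i (pd j (vcmp i u))) :=
    pd_comm (contdiff_pd (hc i) j) i j
  have e2 : pd i (pd j (vcmp i u)) = pd j (pd i (vcmp i u)) := pd_comm (hc i) i j
  rw [e1, e2]

lemma vdiv_smul_sub {u : E3 → E3} (hu : ContDiff ℝ (⊤ : ℕ∞) u) (lam : ℝ) (x : E3) :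
    vdiv (fun y => lam • u y - vlap u y) x = lam * vdiv u x - vdiv (vlap u) x := by
  have hd0 : DifferentiableAt ℝ u x := hu.differentiable (by simp) x
  have hd1 : DifferentiableAt ℝ (fun y => lam • u y) x := hd0.const_smul lam
  have hd2 : DifferentiableAt ℝ (vlap u) x := (contdiff_vlap hu).differentiable (by simp) x
  unfold vdiv
  have key : ∀ i : Fin 3,
      fderiv ℝ (fun y => lam • u y - vlap u y) x (EuclideanSpace.single i 1) i
        = lam * fderiv ℝ u x (EuclideanSpace.single i 1) i
          - fderiv ℝ (vlap u) x (EuclideanSpace.single i 1) i := by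
    intro i
    rw [fderiv_fun_sub hd1 hd2, fderiv_fun_const_smul hd0 lam]
    simp [smul_eq_mul]
  simp only [key]
  rw [Finset.sum_sub_distrib, Finset.mul_sum]

/-- For `λ > 0` and `u` smooth with compact support, `u` is divergence free
if and only if `(λI − Δ)u = λ•u − Δu` is divergence free. -/
theorem vdiv_eq_zero_iff_vdiv_smul_sub_lap_eq_zero
    (lam : ℝ) (hlam : 0 < lam)
    (u : E3 → E3) (hu : ContDiff ℝ (⊤ : ℕ∞) u) (hcs : HasCompactSupport u) :
    (∀ x : E3, vdiv u x = 0) ↔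
      (∀ x : E3, vdiv (fun y => lam • u y - vlap u y) x = 0) := by
  have hfsm : ContDiff ℝ (⊤ : ℕ∞) (vdiv u) := by
    have h1 : vdiv u = fun x => ∑ i : Fin 3, pd i (vcmp i u) x :=
      funext fun x => vdiv_eq (hu.differentiable (by simp)) x
    rw [h1]
    exact ContDiff.sum fun i _ => contdiff_pd (contdiff_vcmp hu i) i
  have main : ∀ x : E3, vdiv (fun y => lam • u y - vlap u y) x
      = lam * vdiv u x - ∑ j : Fin 3, pd j (pd j (vdiv u)) x := fun x => by
    rw [vdiv_smul_sub hu lam x, vdiv_vlap_eq hu x]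
  constructor
  · intro hf0 x
    have hfz : vdiv u = fun _ => (0:ℝ) := funext hf0
    rw [main x, hfz]
    have hz : ∀ j : Fin 3, pd j (fun _ => (0:ℝ)) = fun _ => (0:ℝ) := by
      intro j; funext y; simp [pd]
    simp [hz, pd]
  · intro h
    have heq : ∀ x : E3, lam * vdiv u x = ∑ j : Fin 3, pd j (pd j (vdiv u)) x := by
      intro x
      have := h x
      rw [main x] at this
      linarith
    have hfc : HasCompactSupport (vdiv u) := by
      have : vdiv u = (fun L : E3 →L[ℝ] E3 =>
          ∑ i : Fin 3, L (EuclideanSpace.single i 1) i) ∘ fderiv ℝ u := rfl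
      rw [this]
      exact (hcs.fderiv (𝕜 := ℝ)).comp_left (by simp)
    obtain ⟨x₀, hx₀⟩ := hfsm.continuous.exists_forall_ge_of_hasCompactSupport hfc
    obtain ⟨x₁, hx₁⟩ := hfsm.continuous.exists_forall_le_of_hasCompactSupport hfc
    have hmax : vdiv u x₀ ≤ 0 := by
      by_contra hp
      push_neg at hp
      have h1 : ∑ j : Fin 3, pd j (pd j (vdiv u)) x₀ ≤ 0 :=
        Finset.sum_nonpos fun j _ => pd_pd_nonpos_at_max hfsm hx₀ j
      have := heq x₀
      nlinarith
    have hmin : 0 ≤ vdiv u x₁ := by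
      by_contra hp
      push_neg at hp
      have h1 : 0 ≤ ∑ j : Fin 3, pd j (pd j (vdiv u)) x₁ :=
        Finset.sum_nonneg fun j _ => pd_pd_nonneg_at_min hfsm hx₁ j
      have := heq x₁
      nlinarith
    intro x
    exact le_antisymm (le_trans (hx₀ x) hmax) (le_trans hmin (hx₁ x))
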